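/- arXiv:2204.02517 — 3 statements merged into one kernel-verified Lean document; each statement's English description precedes it below -/
import Mathlib

section
/- Let b ∈ (0,1). For every bounded measurable function h : ℝ → ℂ with 𝒟^b h bounded, and every f ∈ L²(ℝ), one has ‖𝒟^b(h f)‖_{L²(ℝ)} ≤ ‖𝒟^b h‖_{L^∞(ℝ)} ‖f‖_{L²(ℝ)} + ‖h‖_{L^∞(ℝ)} ‖𝒟^b f‖_{L²(ℝ)} (as an inequality in the extended reals). -/
/-!
Against the measure `|x - y|^{-(1+2b)} dy`, `𝒟^b g(x)` is the `L²` norm of `y ↦ g x - g y`.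
Splitting `h x f x - h y f y = (h x - h y) f x + h y (f x - f y)`, Minkowski's inequality in `y`
gives the pointwise Leibniz bound `𝒟^b(hf)(x) ≤ |f x| 𝒟^b h(x) + ‖h‖_∞ 𝒟^b f(x)`, and Minkowski's
inequality in `x` turns it into the estimate.
-/

open MeasureTheory Complex ENNReal NNReal

noncomputable section

/-- Fourier transform `f̂(ξ) = ∫ f(x) e^{-i x ξ} dx`. -/
def ftransform (f : ℝ → ℂ) (ξ : ℝ) : ℂ :=
  ∫ x : ℝ, f x * Complex.exp (-(Complex.I) * x * ξ)

/-- Inverse Fourier transform. -/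
def invFtransform (g : ℝ → ℂ) (x : ℝ) : ℂ :=
  ((1 / (2 * Real.pi) : ℝ) : ℂ) * ∫ ξ : ℝ, g ξ * Complex.exp (Complex.I * x * ξ)

/-- Bessel potential `J^s`, defined via `(J^s f)^(ξ) = (1+ξ²)^{s/2} f̂(ξ)`. -/
def bessel (s : ℝ) (f : ℝ → ℂ) : ℝ → ℂ :=
  invFtransform (fun ξ => (((1 + ξ ^ 2) ^ (s / 2) : ℝ) : ℂ) * ftransform f ξ)

/-- Riesz potential `D^s`, defined via `(D^s f)^(ξ) = |ξ|^s f̂(ξ)`. -/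
def riesz (s : ℝ) (f : ℝ → ℂ) : ℝ → ℂ :=
  invFtransform (fun ξ => ((|ξ| ^ s : ℝ) : ℂ) * ftransform f ξ)

/-- Hilbert transform, defined via `(ℋ f)^(ξ) = -i sgn(ξ) f̂(ξ)`. -/
def hilbert (f : ℝ → ℂ) : ℝ → ℂ :=
  invFtransform (fun ξ => -(Complex.I) * ((Real.sign ξ : ℝ) : ℂ) * ftransform f ξ)

/-- Unitary group `U(t)` of the linear DGBO equation:
`(U(t)φ)^(ξ) = e^{-i t ξ |ξ|^{1+a}} φ̂(ξ)`. -/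
def Ugrp (a t : ℝ) (φ : ℝ → ℂ) : ℝ → ℂ :=
  invFtransform (fun ξ =>
    Complex.exp (-(Complex.I) * t * ξ * ((|ξ| ^ (1 + a) : ℝ) : ℂ)) * ftransform φ ξ)

/-- Japanese bracket weight `⟨x⟩^r = (1+x²)^{r/2}`. -/
def jweight (r x : ℝ) : ℝ := (1 + x ^ 2) ^ (r / 2)

/-- Stein derivative `𝒟^b g(x) = (∫ |g(x)-g(y)|²/|x-y|^{1+2b} dy)^{1/2}`, valued in `ℝ≥0∞`. -/
def steinDeriv (b : ℝ) (g : ℝ → ℂ) (x : ℝ) : ℝ≥0∞ :=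
  (∫⁻ y : ℝ, ENNReal.ofReal (‖g x - g y‖ ^ 2 / |x - y| ^ (1 + 2 * b))) ^ ((1:ℝ)/2)

/-- `L²` norm of the Stein derivative (in the extended reals). -/
def steinL2 (b : ℝ) (g : ℝ → ℂ) : ℝ≥0∞ :=
  (∫⁻ x : ℝ, steinDeriv b g x ^ (2:ℝ)) ^ ((1:ℝ)/2)

section WeightedMinkowski

variable {α ε E F : Type*} [MeasurableSpace α] {μ : Measure α} {p : ℝ≥0∞} [ENorm ε]
  [TopologicalSpace E] [ContinuousENorm E] [TopologicalSpace F] [ContinuousENorm F]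

theorem eLpNorm_const_mul_enorm (c : ℝ≥0∞) {u : α → E} (hu : AEStronglyMeasurable u μ) :
    eLpNorm (fun x => c * ‖u x‖ₑ) p μ = c * eLpNorm u p μ := by
  rcases eq_or_ne p 0 with rfl | hp0
  · simp
  rcases eq_or_ne p ∞ with rfl | hptop
  · simp only [eLpNorm_exponent_top, eLpNormEssSup_eq_essSup_enorm, enorm_eq_self]
    exact ENNReal.essSup_const_mul
  have hp : 0 < p.toReal := ENNReal.toReal_pos hp0 hptop
  simp only [eLpNorm_eq_lintegral_rpow_enorm_toReal hp0 hptop, enorm_eq_self,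
    ENNReal.mul_rpow_of_nonneg _ _ hp.le]
  rw [lintegral_const_mul'' _ (hu.enorm.pow_const _),
    ENNReal.mul_rpow_of_nonneg _ _ (by positivity), ← ENNReal.rpow_mul,
    mul_one_div_cancel hp.ne', ENNReal.rpow_one]

theorem eLpNorm_le_mul_add_mul {g : α → ε} {u₁ : α → E} {u₂ : α → F} {c₁ c₂ : ℝ≥0∞}
    (hu₁ : AEStronglyMeasurable u₁ μ) (hu₂ : AEStronglyMeasurable u₂ μ) (hp : 1 ≤ p)
    (hg : ∀ᵐ x ∂μ, ‖g x‖ₑ ≤ c₁ * ‖u₁ x‖ₑ + c₂ * ‖u₂ x‖ₑ) :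
    eLpNorm g p μ ≤ c₁ * eLpNorm u₁ p μ + c₂ * eLpNorm u₂ p μ := by
  calc eLpNorm g p μ ≤ eLpNorm ((fun x => c₁ * ‖u₁ x‖ₑ) + fun x => c₂ * ‖u₂ x‖ₑ) p μ :=
        eLpNorm_mono_enorm_ae hg
    _ ≤ eLpNorm (fun x => c₁ * ‖u₁ x‖ₑ) p μ + eLpNorm (fun x => c₂ * ‖u₂ x‖ₑ) p μ :=
        eLpNorm_add_le (hu₁.enorm.const_mul c₁).aestronglyMeasurable
          (hu₂.enorm.const_mul c₂).aestronglyMeasurable hp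
    _ = c₁ * eLpNorm u₁ p μ + c₂ * eLpNorm u₂ p μ := by
        rw [eLpNorm_const_mul_enorm c₁ hu₁, eLpNorm_const_mul_enorm c₂ hu₂]

end WeightedMinkowski

def steinWeight (b x : ℝ) : Measure ℝ :=
  volume.withDensity fun y => (ENNReal.ofReal (|x - y| ^ (1 + 2 * b)))⁻¹

theorem steinWeight_absolutelyContinuous (b x : ℝ) : steinWeight b x ≪ volume :=
  withDensity_absolutelyContinuous _ _

theorem steinDeriv_eq_eLpNorm (b : ℝ) (g : ℝ → ℂ) (x : ℝ) :
    steinDeriv b g x = eLpNorm (fun y => g x - g y) 2 (steinWeight b x) := by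
  have hxy : ∀ᵐ y ∂(volume : Measure ℝ), 0 < |x - y| ^ (1 + 2 * b) := by
    filter_upwards [Measure.ae_ne volume x] with y hy
    exact Real.rpow_pos_of_pos (abs_pos.2 (sub_ne_zero.2 hy.symm)) _
  rw [eLpNorm_eq_lintegral_rpow_enorm_toReal two_ne_zero ofNat_ne_top, steinWeight,
    lintegral_withDensity_eq_lintegral_mul_non_measurable _ (by fun_prop)
      (hxy.mono fun y hy => by simpa using hy), steinDeriv]
  congr 1
  refine lintegral_congr_ae (hxy.mono fun y hy => ?_)
  dsimp only [Pi.mul_apply]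
  rw [ENNReal.ofReal_div_of_pos hy, ENNReal.ofReal_pow (norm_nonneg _), ofReal_norm,
    ENNReal.div_eq_inv_mul]
  norm_num

theorem steinL2_eq_eLpNorm (b : ℝ) (g : ℝ → ℂ) :
    steinL2 b g = eLpNorm (steinDeriv b g) 2 volume := by
  simp [steinL2, eLpNorm_eq_lintegral_rpow_enorm_toReal two_ne_zero ofNat_ne_top]

theorem measurable_steinDeriv (b : ℝ) {g : ℝ → ℂ} (hg : Measurable g) :
    Measurable (steinDeriv b g) := by
  refine Measurable.pow_const (Measurable.lintegral_prod_right ?_) _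
  exact ENNReal.measurable_ofReal.comp
    ((((hg.comp measurable_fst).sub (hg.comp measurable_snd)).norm.pow_const 2).div
      ((measurable_fst.sub measurable_snd).abs.pow_const _))

theorem steinDeriv_congr_ae (b : ℝ) {g g' : ℝ → ℂ} (hg : g =ᵐ[volume] g') :
    steinDeriv b g =ᵐ[volume] steinDeriv b g' := by
  filter_upwards [hg] with x hx
  simp only [steinDeriv_eq_eLpNorm]
  refine eLpNorm_congr_ae ((steinWeight_absolutelyContinuous b x).ae_le ?_)
  filter_upwards [hg] with y hy
  rw [hx, hy]

theorem aemeasurable_steinDeriv (b : ℝ) {g : ℝ → ℂ} (hg : AEMeasurable g) :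
    AEMeasurable (steinDeriv b g) :=
  (measurable_steinDeriv b hg.measurable_mk).aemeasurable.congr
    (steinDeriv_congr_ae b hg.ae_eq_mk).symm

theorem steinDeriv_mul_le (b : ℝ) {h f : ℝ → ℂ} (hh : AEMeasurable h) (hf : AEMeasurable f)
    (x : ℝ) :
    steinDeriv b (fun y => h y * f y) x ≤
      ‖f x‖ₑ * steinDeriv b h x + eLpNorm h ∞ volume * steinDeriv b f x := by
  have hac := steinWeight_absolutelyContinuous b x
  simp only [steinDeriv_eq_eLpNorm]
  refine eLpNorm_le_mul_add_mul ((aemeasurable_const.sub (hh.mono_ac hac)).aestronglyMeasurable)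
    ((aemeasurable_const.sub (hf.mono_ac hac)).aestronglyMeasurable) one_le_two ?_
  filter_upwards [hac.ae_le (enorm_ae_le_eLpNormEssSup h volume)] with y hy
  calc ‖h x * f x - h y * f y‖ₑ = ‖(h x - h y) * f x + h y * (f x - f y)‖ₑ := by ring_nf
    _ ≤ ‖(h x - h y) * f x‖ₑ + ‖h y * (f x - f y)‖ₑ := enorm_add_le _ _
    _ = ‖f x‖ₑ * ‖h x - h y‖ₑ + ‖h y‖ₑ * ‖f x - f y‖ₑ := by
        rw [enorm_mul, enorm_mul, mul_comm ‖h x - h y‖ₑ]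
    _ ≤ ‖f x‖ₑ * ‖h x - h y‖ₑ + eLpNorm h ∞ volume * ‖f x - f y‖ₑ := by
        rw [eLpNorm_exponent_top]
        gcongr

theorem stein_deriv_product_estimate_general (b : ℝ)
    (h f : ℝ → ℂ) (hmeas : Measurable h)
    (hf : MemLp f 2 volume) :
    steinL2 b (fun x : ℝ => h x * f x) ≤
      essSup (steinDeriv b h) volume * eLpNorm f 2 volume +
        eLpNorm h ⊤ volume * steinL2 b f := by
  have hfm : AEMeasurable f := hf.aestronglyMeasurable.aemeasurable
  simp only [steinL2_eq_eLpNorm]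
  refine eLpNorm_le_mul_add_mul hf.aestronglyMeasurable
    (aemeasurable_steinDeriv b hfm).aestronglyMeasurable one_le_two ?_
  filter_upwards [ae_le_essSup (steinDeriv b h)] with x hx
  calc steinDeriv b (fun y => h y * f y) x
      ≤ ‖f x‖ₑ * steinDeriv b h x + eLpNorm h ∞ volume * steinDeriv b f x :=
        steinDeriv_mul_le b hmeas.aemeasurable hfm x
    _ ≤ essSup (steinDeriv b h) volume * ‖f x‖ₑ + eLpNorm h ⊤ volume * ‖steinDeriv b f x‖ₑ := by
        rw [mul_comm, enorm_eq_self]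
        gcongr

/-- Lemma \eqref{Leibh}: for `b ∈ (0,1)`, a bounded measurable `h` with
`𝒟^b h` bounded and `f ∈ L²`,
`‖𝒟^b(h f)‖_{L²} ≤ ‖𝒟^b h‖_{L^∞} ‖f‖_{L²} + ‖h‖_{L^∞} ‖𝒟^b f‖_{L²}`. -/
theorem stein_deriv_product_estimate (b : ℝ) (hb : b ∈ Set.Ioo (0:ℝ) 1)
    (h f : ℝ → ℂ) (hmeas : Measurable h)
    (hbdd : ∃ M : ℝ, ∀ x : ℝ, ‖h x‖ ≤ M)
    (hDbdd : ∃ M : ℝ≥0∞, M ≠ ⊤ ∧ ∀ x : ℝ, steinDeriv b h x ≤ M)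
    (hf : MemLp f 2 volume) :
    steinL2 b (fun x : ℝ => h x * f x) ≤
      essSup (steinDeriv b h) volume * eLpNorm f 2 volume +
        eLpNorm h ⊤ volume * steinL2 b f :=
  stein_deriv_product_estimate_general b h f hmeas hf
end
end

section
/- Let a ∈ (0,1) and b ∈ (0,1). There exists a constant C > 0 (depending only on a and b) such that for every t > 0 and every x ∈ ℝ, the Stein derivative of the function y ↦ e^{−i t y |y|^{1+a}} satisfies 𝒟^b(e^{−i t (·) |·|^{1+a}})(x) ≤ C ( t^{b/(2+a)} + t^b |x|^{(1+a)b} ). -/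
open MeasureTheory Complex ENNReal NNReal

noncomputable section

/-! Split the Stein integral at the scale `ρ = D⁻¹`, `D = t^{1/(2+a)} + t|x|^{1+a}`. For
`|y - x| ≤ ρ` the phase `y ↦ t y |y|^{1+a}` has slope `≲ t (|x| + ρ)^{1+a} ≲ D` between `x` and `y`,
so the integrand is `≲ D² |y - x|^{1-2b}`; for `|y - x| > ρ` the two unimodular values differ by
at most `2`. Both pieces contribute `≲ ρ^{-2b} = D^{2b}`, and `D^b ≤ t^{b/(2+a)} + t^b |x|^{(1+a)b}`
by subadditivity of `r ↦ r^b`. -/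

open Set

theorem lintegral_comp_abs (f : ℝ → ℝ≥0∞) :
    ∫⁻ x, f |x| = 2 * ∫⁻ x in Ioi 0, f x := by
  have hpos : ∫⁻ x in Ioi 0, f |x| = ∫⁻ x in Ioi 0, f x :=
    setLIntegral_congr_fun measurableSet_Ioi fun x hx => by rw [abs_of_pos hx]
  have hneg : ∫⁻ x in Iic 0, f |x| = ∫⁻ x in Ioi 0, f x := by
    calc ∫⁻ x in Iic 0, f |x| = ∫⁻ x in Neg.neg ⁻¹' Ici 0, f (-x) := by
          rw [neg_preimage, neg_Ici, neg_zero]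
          exact setLIntegral_congr_fun measurableSet_Iic fun x hx => by
            rw [abs_of_nonpos hx]
      _ = ∫⁻ x in Ici 0, f x :=
          (Measure.measurePreserving_neg volume).setLIntegral_comp_preimage_emb
            (Homeomorph.neg ℝ).measurableEmbedding f _
      _ = ∫⁻ x in Ioi 0, f x := setLIntegral_congr Ioi_ae_eq_Ici.symm
  rw [← lintegral_add_compl _ measurableSet_Ioi, compl_Ioi, hpos, hneg, two_mul]

theorem lintegral_Ioc_ofReal_rpow {q : ℝ} (hq : -1 < q) {ρ : ℝ} (hρ : 0 ≤ ρ) :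
    ∫⁻ r in Ioc 0 ρ, ENNReal.ofReal (r ^ q) = ENNReal.ofReal (ρ ^ (q + 1) / (q + 1)) := by
  have hint : IntegrableOn (fun r : ℝ => r ^ q) (Ioc 0 ρ) := by
    simpa [intervalIntegrable_iff, uIoc_of_le hρ] using
      intervalIntegral.intervalIntegrable_rpow' (a := 0) (b := ρ) hq
  rw [← ofReal_integral_eq_lintegral_ofReal hint
    ((ae_restrict_mem measurableSet_Ioc).mono fun r hr => Real.rpow_nonneg hr.1.le q),
    ← intervalIntegral.integral_of_le hρ, integral_rpow (Or.inl hq),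
    Real.zero_rpow (by linarith), sub_zero]

theorem lintegral_Ioi_ofReal_rpow {q : ℝ} (hq : q < -1) {ρ : ℝ} (hρ : 0 < ρ) :
    ∫⁻ r in Ioi ρ, ENNReal.ofReal (r ^ q) = ENNReal.ofReal (-ρ ^ (q + 1) / (q + 1)) := by
  rw [← ofReal_integral_eq_lintegral_ofReal (integrableOn_Ioi_rpow_of_lt hq hρ)
    ((ae_restrict_mem measurableSet_Ioi).mono fun r hr => Real.rpow_nonneg (hρ.trans hr).le q),
    integral_Ioi_rpow_of_lt hq hρ]

def nearFarMajorant (b ρ K M r : ℝ) : ℝ≥0∞ :=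
  if r ≤ ρ then ENNReal.ofReal ((K / ρ) ^ 2 * r ^ (1 - 2 * b))
  else ENNReal.ofReal (M ^ 2 * r ^ (-(1 + 2 * b)))

theorem ofReal_div_rpow_le_nearFarMajorant {b : ℝ} (hb0 : 0 < b) {g : ℝ → ℂ}
    {x ρ K M : ℝ} (hnear : ∀ y, |y - x| ≤ ρ → ‖g x - g y‖ ≤ K * |y - x| / ρ)
    (hfar : ∀ y, ‖g x - g y‖ ≤ M) (y : ℝ) :
    ENNReal.ofReal (‖g x - g y‖ ^ 2 / |x - y| ^ (1 + 2 * b)) ≤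
      nearFarMajorant b ρ K M |y - x| := by
  rw [abs_sub_comm x y]
  rcases (abs_nonneg (y - x)).eq_or_lt with h0 | h0
  · simp [← h0, Real.zero_rpow (by linarith : 1 + 2 * b ≠ 0)]
  rw [nearFarMajorant]
  split_ifs with hr
  · refine ENNReal.ofReal_le_ofReal ?_
    calc ‖g x - g y‖ ^ 2 / |y - x| ^ (1 + 2 * b)
        ≤ (K * |y - x| / ρ) ^ 2 / |y - x| ^ (1 + 2 * b) := by
          gcongr
          exact hnear y hr
      _ = (K / ρ) ^ 2 * (|y - x| ^ (2 : ℝ) / |y - x| ^ (1 + 2 * b)) := by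
          rw [Real.rpow_two]; ring
      _ = (K / ρ) ^ 2 * |y - x| ^ (1 - 2 * b) := by
          rw [← Real.rpow_sub h0]; ring_nf
  · refine ENNReal.ofReal_le_ofReal ?_
    rw [Real.rpow_neg h0.le, ← div_eq_mul_inv]
    gcongr
    exact hfar y

theorem two_mul_lintegral_nearFarMajorant {b : ℝ} (hb0 : 0 < b) (hb1 : b < 1) {ρ : ℝ}
    (hρ : 0 < ρ) (K M : ℝ) :
    2 * ∫⁻ r in Ioi 0, nearFarMajorant b ρ K M r =
      ENNReal.ofReal ((K ^ 2 / (1 - b) + M ^ 2 / b) * ρ ^ (-(2 * b))) := by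
  have hnear : ∫⁻ r in Ioc 0 ρ, nearFarMajorant b ρ K M r =
      ENNReal.ofReal ((K / ρ) ^ 2 * (ρ ^ (2 - 2 * b) / (2 - 2 * b))) := by
    simp only [nearFarMajorant]
    rw [setLIntegral_congr_fun measurableSet_Ioc fun r hr => if_pos hr.2]
    simp_rw [ENNReal.ofReal_mul (sq_nonneg _)]
    rw [lintegral_const_mul _ (by fun_prop), lintegral_Ioc_ofReal_rpow (by linarith) hρ.le]
    ring_nf
  have hfar : ∫⁻ r in Ioi ρ, nearFarMajorant b ρ K M r =
      ENNReal.ofReal (M ^ 2 * (ρ ^ (-(2 * b)) / (2 * b))) := by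
    simp only [nearFarMajorant]
    rw [setLIntegral_congr_fun measurableSet_Ioi fun r hr => if_neg (not_le.2 hr)]
    simp_rw [ENNReal.ofReal_mul (sq_nonneg _)]
    rw [lintegral_const_mul _ (by fun_prop), lintegral_Ioi_ofReal_rpow (by linarith) hρ]
    ring_nf
  rw [← Ioc_union_Ioi_eq_Ioi hρ.le, lintegral_union measurableSet_Ioi (Ioc_disjoint_Ioi le_rfl),
    hnear, hfar, ← ENNReal.ofReal_add
      (mul_nonneg (sq_nonneg _) (div_nonneg (by positivity) (by linarith))) (by positivity),
    ← ENNReal.ofReal_ofNat 2, ← ENNReal.ofReal_mul zero_le_two]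
  congr 1
  rw [show 2 - 2 * b = 2 + -(2 * b) by ring, Real.rpow_add hρ, Real.rpow_two]
  field_simp
  ring

theorem lintegral_stein_kernel_le {b : ℝ} (hb0 : 0 < b) (hb1 : b < 1) {g : ℝ → ℂ}
    {x ρ K M : ℝ} (hρ : 0 < ρ) (hnear : ∀ y, |y - x| ≤ ρ → ‖g x - g y‖ ≤ K * |y - x| / ρ)
    (hfar : ∀ y, ‖g x - g y‖ ≤ M) :
    ∫⁻ y, ENNReal.ofReal (‖g x - g y‖ ^ 2 / |x - y| ^ (1 + 2 * b)) ≤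
      ENNReal.ofReal ((K ^ 2 / (1 - b) + M ^ 2 / b) * ρ ^ (-(2 * b))) :=
  calc ∫⁻ y, ENNReal.ofReal (‖g x - g y‖ ^ 2 / |x - y| ^ (1 + 2 * b))
      ≤ ∫⁻ y, nearFarMajorant b ρ K M |y - x| :=
        lintegral_mono (ofReal_div_rpow_le_nearFarMajorant hb0 hnear hfar)
    _ = ∫⁻ u, nearFarMajorant b ρ K M |u| :=
        lintegral_sub_right_eq_self (fun u => nearFarMajorant b ρ K M |u|) x
    _ = 2 * ∫⁻ r in Ioi 0, nearFarMajorant b ρ K M r := lintegral_comp_abs _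
    _ = _ := two_mul_lintegral_nearFarMajorant hb0 hb1 hρ K M

theorem steinDeriv_le_of_near_far {b : ℝ} (hb0 : 0 < b) (hb1 : b < 1) {g : ℝ → ℂ}
    {x ρ K M : ℝ} (hρ : 0 < ρ) (hnear : ∀ y, |y - x| ≤ ρ → ‖g x - g y‖ ≤ K * |y - x| / ρ)
    (hfar : ∀ y, ‖g x - g y‖ ≤ M) :
    steinDeriv b g x ≤ ENNReal.ofReal (√(K ^ 2 / (1 - b) + M ^ 2 / b) * ρ ^ (-b)) := by
  have hc : 0 ≤ K ^ 2 / (1 - b) + M ^ 2 / b :=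
    add_nonneg (div_nonneg (sq_nonneg _) (by linarith)) (by positivity)
  calc steinDeriv b g x
      ≤ ENNReal.ofReal ((K ^ 2 / (1 - b) + M ^ 2 / b) * ρ ^ (-(2 * b))) ^ ((1 : ℝ) / 2) :=
        ENNReal.rpow_le_rpow (lintegral_stein_kernel_le hb0 hb1 hρ hnear hfar) (by norm_num)
    _ = ENNReal.ofReal (√(K ^ 2 / (1 - b) + M ^ 2 / b) * ρ ^ (-b)) := by
        rw [ENNReal.ofReal_rpow_of_nonneg (mul_nonneg hc (by positivity)) (by norm_num),
          Real.mul_rpow hc (by positivity), ← Real.sqrt_eq_rpow, ← Real.rpow_mul hρ.le]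
        ring_nf

theorem Real.rpow_add_le_mul_rpow_add_rpow {p a b : ℝ} (ha : 0 ≤ a) (hb : 0 ≤ b) (hp : 1 ≤ p) :
    (a + b) ^ p ≤ 2 ^ (p - 1) * (a ^ p + b ^ p) := by
  lift a to ℝ≥0 using ha
  lift b to ℝ≥0 using hb
  exact_mod_cast NNReal.rpow_add_le_mul_rpow_add_rpow a b hp

theorem abs_rpow_sub_rpow_le {p : ℝ} (hp : 1 ≤ p) {A B : ℝ} (hA : 0 ≤ A) (hB : 0 ≤ B) :
    |A ^ p - B ^ p| ≤ p * max A B ^ (p - 1) * |A - B| := by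
  set M := max A B
  have hderiv : ∀ z ∈ Icc 0 M, HasDerivWithinAt (fun y : ℝ => y ^ p) (p * z ^ (p - 1)) (Icc 0 M) z :=
    fun z _ => (Real.hasDerivAt_rpow_const (Or.inr hp)).hasDerivWithinAt
  have hbound : ∀ z ∈ Icc 0 M, ‖p * z ^ (p - 1)‖ ≤ p * M ^ (p - 1) := fun z hz => by
    rw [Real.norm_eq_abs, abs_of_nonneg (mul_nonneg (by linarith) (Real.rpow_nonneg hz.1 _))]
    exact mul_le_mul_of_nonneg_left (Real.rpow_le_rpow hz.1 hz.2 (by linarith)) (by linarith)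
  simpa [Real.norm_eq_abs] using (convex_Icc 0 M).norm_image_sub_le_of_norm_hasDerivWithin_le
    hderiv hbound ⟨hB, le_max_right _ _⟩ ⟨hA, le_max_left _ _⟩

theorem abs_mul_abs_rpow_sub_le {s : ℝ} (hs : 1 ≤ s) (x y : ℝ) :
    |x * |x| ^ s - y * |y| ^ s| ≤ (1 + s) * max |x| |y| ^ s * |x - y| := by
  set M := max |x| |y|
  have hM : 0 ≤ M := (abs_nonneg x).trans (le_max_left _ _)
  have hfirst : |(x - y) * |x| ^ s| ≤ M ^ s * |x - y| := by
    rw [abs_mul, abs_of_nonneg (Real.rpow_nonneg (abs_nonneg x) s), mul_comm]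
    exact mul_le_mul_of_nonneg_right
      (Real.rpow_le_rpow (abs_nonneg x) (le_max_left _ _) (by linarith)) (abs_nonneg _)
  have hsecond : |y * (|x| ^ s - |y| ^ s)| ≤ s * M ^ s * |x - y| :=
    calc |y * (|x| ^ s - |y| ^ s)|
        ≤ M * (s * M ^ (s - 1) * |x - y|) := by
          rw [abs_mul]
          refine mul_le_mul (le_max_right _ _) ?_ (abs_nonneg _) hM
          refine (abs_rpow_sub_rpow_le hs (abs_nonneg x) (abs_nonneg y)).trans ?_
          exact mul_le_mul_of_nonneg_left (abs_abs_sub_abs_le_abs_sub x y)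
            (mul_nonneg (by linarith) (Real.rpow_nonneg hM _))
      _ = s * M ^ s * |x - y| := by
          rw [show M ^ s = M ^ (1 + (s - 1)) by ring_nf, Real.rpow_add' hM (by linarith),
            Real.rpow_one]
          ring
  calc |x * |x| ^ s - y * |y| ^ s| = |(x - y) * |x| ^ s + y * (|x| ^ s - |y| ^ s)| := by ring_nf
    _ ≤ M ^ s * |x - y| + s * M ^ s * |x - y| := (abs_add_le _ _).trans (add_le_add hfirst hsecond)
    _ = (1 + s) * M ^ s * |x - y| := by ring

theorem norm_exp_mul_I_sub_exp_mul_I_le (α β : ℝ) :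
    ‖exp (α * I) - exp (β * I)‖ ≤ |α - β| := by
  have h : exp (α * I) - exp (β * I) = exp (β * I) * (exp (I * ↑(α - β)) - 1) := by
    rw [mul_sub, ← Complex.exp_add]
    push_cast
    ring_nf
  rw [h, norm_mul, Complex.norm_exp_ofReal_mul_I, one_mul]
  exact Real.norm_exp_I_mul_ofReal_sub_one_le

def phaseExp (s t y : ℝ) : ℂ := exp (-I * t * y * ((|y| ^ s : ℝ) : ℂ))

theorem phaseExp_eq (s t y : ℝ) : phaseExp s t y = exp (↑(-(t * (y * |y| ^ s))) * I) := by
  rw [phaseExp]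
  push_cast
  ring_nf

theorem norm_phaseExp (s t y : ℝ) : ‖phaseExp s t y‖ = 1 := by
  rw [phaseExp_eq, Complex.norm_exp_ofReal_mul_I]

theorem norm_phaseExp_sub_le_two (s t x y : ℝ) : ‖phaseExp s t x - phaseExp s t y‖ ≤ 2 :=
  (norm_sub_le _ _).trans (by rw [norm_phaseExp, norm_phaseExp]; norm_num)

theorem norm_phaseExp_sub_le (s : ℝ) {t : ℝ} (ht : 0 ≤ t) (x y : ℝ) :
    ‖phaseExp s t x - phaseExp s t y‖ ≤ t * |x * |x| ^ s - y * |y| ^ s| := by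
  rw [phaseExp_eq, phaseExp_eq]
  refine (norm_exp_mul_I_sub_exp_mul_I_le _ _).trans_eq ?_
  rw [show -(t * (x * |x| ^ s)) - -(t * (y * |y| ^ s)) = t * (y * |y| ^ s - x * |x| ^ s) by ring,
    abs_mul, abs_of_nonneg ht, abs_sub_comm]

theorem norm_phaseExp_sub_le_of_abs_sub_le {a t x y ρ : ℝ} (ha0 : 0 ≤ a) (ha1 : a ≤ 1)
    (ht : 0 ≤ t) (hyx : |y - x| ≤ ρ) :
    ‖phaseExp (1 + a) t x - phaseExp (1 + a) t y‖ ≤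
      6 * (t * |x| ^ (1 + a) + t * ρ ^ (1 + a)) * |y - x| := by
  have hρ : 0 ≤ ρ := (abs_nonneg _).trans hyx
  have hmax : max |x| |y| ≤ |x| + ρ :=
    max_le (le_add_of_nonneg_right hρ) (by
      calc |y| = |x + (y - x)| := by ring_nf
        _ ≤ |x| + |y - x| := abs_add_le _ _
        _ ≤ |x| + ρ := by linarith)
  have hpow : max |x| |y| ^ (1 + a) ≤ 2 * (|x| ^ (1 + a) + ρ ^ (1 + a)) :=
    calc max |x| |y| ^ (1 + a) ≤ (|x| + ρ) ^ (1 + a) :=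
          Real.rpow_le_rpow (by positivity) hmax (by linarith)
      _ ≤ 2 ^ (1 + a - 1) * (|x| ^ (1 + a) + ρ ^ (1 + a)) :=
          Real.rpow_add_le_mul_rpow_add_rpow (abs_nonneg x) hρ (by linarith)
      _ ≤ 2 * (|x| ^ (1 + a) + ρ ^ (1 + a)) := by
          gcongr
          simpa using Real.rpow_le_rpow_of_exponent_le one_le_two (by linarith : 1 + a - 1 ≤ 1)
  calc ‖phaseExp (1 + a) t x - phaseExp (1 + a) t y‖
      ≤ t * ((1 + (1 + a)) * max |x| |y| ^ (1 + a) * |x - y|) :=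
        (norm_phaseExp_sub_le _ ht x y).trans
          (mul_le_mul_of_nonneg_left (abs_mul_abs_rpow_sub_le (by linarith) x y) ht)
    _ ≤ t * (3 * (2 * (|x| ^ (1 + a) + ρ ^ (1 + a))) * |y - x|) := by
        rw [abs_sub_comm x y]
        gcongr
        linarith
    _ = 6 * (t * |x| ^ (1 + a) + t * ρ ^ (1 + a)) * |y - x| := by ring

theorem mul_inv_rpow_le {t D p : ℝ} (ht : 0 ≤ t) (hD : 0 < D) (hp : 0 < p) (htD : t ^ p⁻¹ ≤ D) :
    t * D⁻¹ ^ (p - 1) ≤ D := by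
  have h : t ≤ D ^ p :=
    calc t = (t ^ p⁻¹) ^ p := (Real.rpow_inv_rpow ht hp.ne').symm
      _ ≤ D ^ p := Real.rpow_le_rpow (by positivity) htD hp.le
  calc t * D⁻¹ ^ (p - 1) ≤ D ^ p * D ^ (-(p - 1)) := by
        rw [Real.inv_rpow hD.le, Real.rpow_neg hD.le]
        gcongr
    _ = D := by rw [← Real.rpow_add hD]; ring_nf; exact Real.rpow_one D

theorem scale_rpow_le (a : ℝ) {b t : ℝ} (hb0 : 0 ≤ b) (hb1 : b ≤ 1) (ht : 0 ≤ t) (x : ℝ) :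
    (t ^ (1 / (2 + a)) + t * |x| ^ (1 + a)) ^ b ≤ t ^ (b / (2 + a)) + t ^ b * |x| ^ ((1 + a) * b) :=
  calc (t ^ (1 / (2 + a)) + t * |x| ^ (1 + a)) ^ b
      ≤ (t ^ (1 / (2 + a))) ^ b + (t * |x| ^ (1 + a)) ^ b :=
        Real.rpow_add_le_add_rpow (by positivity) (by positivity) hb0 hb1
    _ = t ^ (b / (2 + a)) + t ^ b * |x| ^ ((1 + a) * b) := by
        rw [← Real.rpow_mul ht, Real.mul_rpow ht (by positivity), ← Real.rpow_mul (abs_nonneg x)]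
        ring_nf

/-- Lemma `Pontual1`: for `a, b ∈ (0,1)` there is `C > 0` such that for every
`t > 0` and `x ∈ ℝ`, `𝒟^b(e^{-it(·)|·|^{1+a}})(x) ≤ C (t^{b/(2+a)} + t^b |x|^{(1+a)b})`. -/
theorem stein_deriv_phase_pointwise (a b : ℝ) (ha : a ∈ Set.Ioo (0:ℝ) 1)
    (hb : b ∈ Set.Ioo (0:ℝ) 1) :
    ∃ C : ℝ, 0 < C ∧ ∀ t : ℝ, 0 < t → ∀ x : ℝ,
      steinDeriv b (fun y : ℝ =>
          Complex.exp (-(Complex.I) * t * y * ((|y| ^ (1 + a) : ℝ) : ℂ))) x ≤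
        ENNReal.ofReal (C * (t ^ (b / (2 + a)) + t ^ b * |x| ^ ((1 + a) * b))) := by
  obtain ⟨ha0, ha1⟩ := ha
  obtain ⟨hb0, hb1⟩ := hb
  refine ⟨√(12 ^ 2 / (1 - b) + 2 ^ 2 / b),
    Real.sqrt_pos.2 (add_pos (div_pos (by norm_num) (by linarith)) (by positivity)), fun t ht x => ?_⟩
  set D := t ^ (1 / (2 + a)) + t * |x| ^ (1 + a)
  have hD : 0 < D := by positivity
  have htx : t * |x| ^ (1 + a) ≤ D := le_add_of_nonneg_left (by positivity)
  have htρ : t * D⁻¹ ^ (1 + a) ≤ D := by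
    convert mul_inv_rpow_le ht.le hD (p := 2 + a) (by linarith)
      (by rw [← one_div]; exact le_add_of_nonneg_right (by positivity)) using 3
    ring
  have hnear : ∀ y, |y - x| ≤ D⁻¹ → ‖phaseExp (1 + a) t x - phaseExp (1 + a) t y‖ ≤
      12 * |y - x| / D⁻¹ := fun y hy => by
    refine (norm_phaseExp_sub_le_of_abs_sub_le ha0.le ha1.le ht.le hy).trans ?_
    rw [div_inv_eq_mul]
    nlinarith [abs_nonneg (y - x)]
  calc _ ≤ ENNReal.ofReal (√(12 ^ 2 / (1 - b) + 2 ^ 2 / b) * D⁻¹ ^ (-b)) :=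
        steinDeriv_le_of_near_far hb0 hb1 (inv_pos.2 hD) hnear (norm_phaseExp_sub_le_two _ t x)
    _ ≤ _ := by
      refine ENNReal.ofReal_le_ofReal (mul_le_mul_of_nonneg_left ?_ (Real.sqrt_nonneg _))
      rw [Real.inv_rpow hD.le, ← Real.rpow_neg hD.le, neg_neg]
      exact scale_rpow_le a hb0.le hb1.le ht.le x
end
end

section
/- Let a ∈ (0,1). There exists a constant C > 0 (depending only on a) such that for every σ : ℝ → ℝ with ⟨x⟩³ σ ∈ L²(ℝ), ∫_ℝ σ(x) dx = 0 and ∫_ℝ x σ(x) dx = 0, the function ξ ↦ |ξ|^{a−2} σ̂(ξ) belongs to L²(ℝ) and ‖ |ξ|^{a−2} σ̂ ‖_{L²(ℝ)} ≤ C ‖ ⟨x⟩³ σ ‖_{L²(ℝ)}. -/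
open MeasureTheory Complex ENNReal NNReal

noncomputable section

/-! The vanishing of the zeroth and first moments of `σ` lets one subtract the first-order
Taylor polynomial of the kernel `e^{-ixξ}`, so `|σ̂(ξ)| ≤ 2ξ² ∫ x²|σ|`, while trivially
`|σ̂(ξ)| ≤ ∫ |σ|`. By Cauchy–Schwarz against `⟨x⟩⁻¹ ∈ L²` both moments are at most
`√π ‖⟨x⟩³σ‖₂`. Hence `|ξ|^{a-2} |σ̂(ξ)| ≲ |ξ|^{a-2} min(ξ², 1) ‖⟨x⟩³σ‖₂ ≤ 2⟨ξ⟩⁻¹ ‖⟨x⟩³σ‖₂`,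
and `‖⟨ξ⟩⁻¹‖₂ = √π`. -/

lemma integrable_and_integral_norm_le_of_norm_le_mul {α E F : Type*} [MeasurableSpace α]
    {μ : Measure α} [NormedAddCommGroup E] [NormedAddCommGroup F] {u : α → E} {w : α → ℝ}
    {h : α → F} (hw : MemLp w 2 μ) (hh : MemLp h 2 μ) (hu : AEStronglyMeasurable u μ)
    (hle : ∀ᵐ x ∂μ, ‖u x‖ ≤ w x * ‖h x‖) :
    Integrable u μ ∧ ∫ x, ‖u x‖ ∂μ ≤ (eLpNorm w 2 μ).toReal * (eLpNorm h 2 μ).toReal := by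
  have hwh : Integrable (fun x => w x * ‖h x‖) μ := memLp_one_iff_integrable.1 (hh.norm.mul' hw)
  refine ⟨hwh.mono' hu hle, ?_⟩
  have holder : eLpNorm (fun x => w x * ‖h x‖) 1 μ ≤ eLpNorm w 2 μ * eLpNorm h 2 μ := by
    simpa only [Pi.smul_def, smul_eq_mul, Pi.mul_def, eLpNorm_norm] using
      eLpNorm_smul_le_mul_eLpNorm (p := 2) (q := 2) (r := 1) hh.norm.1 hw.1
  calc ∫ x, ‖u x‖ ∂μ ≤ ∫ x, ‖w x * ‖h x‖‖ ∂μ :=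
        integral_mono_ae (hwh.mono' hu hle).norm hwh.norm
          (hle.mono fun x hx => hx.trans (le_abs_self _))
    _ = (eLpNorm (fun x => w x * ‖h x‖) 1 μ).toReal := by
        rw [integral_norm_eq_lintegral_enorm hwh.1, eLpNorm_one_eq_lintegral_enorm]
    _ ≤ (eLpNorm w 2 μ).toReal * (eLpNorm h 2 μ).toReal := by
        rw [← ENNReal.toReal_mul]
        exact ENNReal.toReal_mono (ENNReal.mul_ne_top hw.2.ne hh.2.ne) holder

lemma jweight_pos (r x : ℝ) : 0 < jweight r x := Real.rpow_pos_of_pos (by positivity) _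

lemma jweight_mul_jweight (r s x : ℝ) : jweight r x * jweight s x = jweight (r + s) x := by
  simp only [jweight, add_div, Real.rpow_add (show (0:ℝ) < 1 + x ^ 2 by positivity)]

lemma jweight_two (x : ℝ) : jweight 2 x = 1 + x ^ 2 := by
  simp [jweight]

lemma jweight_neg_one_sq (x : ℝ) : jweight (-1) x ^ 2 = (1 + x ^ 2)⁻¹ := by
  rw [sq, jweight_mul_jweight, jweight, ← Real.rpow_neg_one]; norm_num

lemma abs_pow_le_jweight_two (x : ℝ) {k : ℕ} (hk : k ≤ 2) : |x| ^ k ≤ jweight 2 x := by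
  rw [jweight_two]
  interval_cases k <;> nlinarith [abs_nonneg x, sq_abs x]

lemma continuous_jweight (r : ℝ) : Continuous (jweight r) :=
  (continuous_const.add (continuous_pow 2)).rpow_const fun x => Or.inl
    (show 1 + x ^ 2 ≠ 0 by positivity)

lemma memLp_jweight_neg_one : MemLp (jweight (-1)) 2 volume := by
  rw [memLp_two_iff_integrable_sq (continuous_jweight _).aestronglyMeasurable]
  simpa only [jweight_neg_one_sq] using integrable_inv_one_add_sq

lemma eLpNorm_jweight_neg_one : eLpNorm (jweight (-1)) 2 volume = ENNReal.ofReal √Real.pi := by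
  rw [memLp_jweight_neg_one.eLpNorm_eq_integral_rpow_norm two_ne_zero ofNat_ne_top]
  simp [Real.norm_eq_abs, abs_of_pos (jweight_pos _ _), jweight_neg_one_sq,
    integral_univ_inv_one_add_sq, Real.sqrt_eq_rpow]

lemma memLp_and_eLpNorm_le_of_norm_le_mul_jweight_neg_one {E : Type*} [NormedAddCommGroup E]
    {F : ℝ → E} (hF : AEStronglyMeasurable F volume) {c : ℝ}
    (hle : ∀ ξ, ‖F ξ‖ ≤ c * jweight (-1) ξ) :
    MemLp F 2 volume ∧ eLpNorm F 2 volume ≤ ENNReal.ofReal (c * √Real.pi) := by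
  have hle' : ∀ ξ, ‖F ξ‖ ≤ c * ‖jweight (-1) ξ‖ := fun ξ => by
    rw [Real.norm_of_nonneg (jweight_pos _ _).le]; exact hle ξ
  refine ⟨memLp_jweight_neg_one.of_le_mul hF (ae_of_all _ hle'), ?_⟩
  rw [ENNReal.ofReal_mul' (Real.sqrt_nonneg _), ← eLpNorm_jweight_neg_one]
  exact eLpNorm_le_mul_eLpNorm_of_ae_le_mul (ae_of_all _ hle') 2

lemma jweight_neg_one (x : ℝ) : jweight (-1) x = (√(1 + x ^ 2))⁻¹ := by
  rw [jweight, Real.sqrt_eq_rpow, ← Real.rpow_neg (by positivity)]; norm_num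

lemma abs_rpow_sub_two_mul_min_le {a : ℝ} (ha : a ∈ Set.Icc (0:ℝ) 1) (ξ : ℝ) :
    |ξ| ^ (a - 2) * min (ξ ^ 2) 1 ≤ 2 * jweight (-1) ξ := by
  have hsqrt : 0 < √(1 + ξ ^ 2) := Real.sqrt_pos.2 (by positivity)
  rw [jweight_neg_one, ← div_eq_mul_inv, le_div_iff₀ hsqrt]
  rcases le_or_gt (ξ ^ 2) 1 with hsmall | hlarge
  · have hpow : |ξ| ^ (a - 2) * ξ ^ 2 ≤ 1 := by
      rcases eq_or_ne ξ 0 with rfl | hξ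
      · simp
      rw [← sq_abs, ← Real.rpow_natCast, ← Real.rpow_add (abs_pos.2 hξ)]
      exact Real.rpow_le_one (abs_nonneg _) (by nlinarith [sq_abs ξ, abs_nonneg ξ]) (by
        push_cast; linarith [ha.1])
    have : √(1 + ξ ^ 2) ≤ 2 := Real.sqrt_le_iff.2 ⟨by norm_num, by linarith⟩
    rw [min_eq_left hsmall]
    nlinarith [Real.rpow_nonneg (abs_nonneg ξ) (a - 2)]
  · have hξ : 1 ≤ |ξ| := by nlinarith [sq_abs ξ, abs_nonneg ξ]
    have hpow : |ξ| ^ (a - 2) ≤ |ξ|⁻¹ := by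
      rw [← Real.rpow_neg_one]
      exact Real.rpow_le_rpow_of_exponent_le hξ (by linarith [ha.2])
    have : √(1 + ξ ^ 2) ≤ 2 * |ξ| :=
      Real.sqrt_le_iff.2 ⟨by positivity, by nlinarith [sq_abs ξ]⟩
    rw [min_eq_right hlarge.le, mul_one]
    calc |ξ| ^ (a - 2) * √(1 + ξ ^ 2) ≤ |ξ|⁻¹ * (2 * |ξ|) :=
          mul_le_mul hpow this hsqrt.le (by positivity)
      _ = 2 := by field_simp

lemma integrable_pow_mul_and_integral_abs_le {σ : ℝ → ℝ}
    (hσ : MemLp (fun x => jweight 3 x * σ x) 2 volume) {k : ℕ} (hk : k ≤ 2) :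
    Integrable (fun x => x ^ k * σ x) volume ∧
      ∫ x, |x ^ k * σ x| ≤ √Real.pi * (eLpNorm (fun x => jweight 3 x * σ x) 2 volume).toReal := by
  have hmeas : AEStronglyMeasurable (fun x => x ^ k * σ x) volume := by
    have hσm : AEStronglyMeasurable σ volume := by
      have hσ_eq : σ = fun x => jweight (-3) x * (jweight 3 x * σ x) := funext fun x => by
        rw [← mul_assoc, jweight_mul_jweight]; norm_num [jweight]
      rw [hσ_eq]
      exact (continuous_jweight (-3)).aestronglyMeasurable.mul hσ.1
    exact (continuous_pow k).aestronglyMeasurable.mul hσm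
  have hle : ∀ x, ‖x ^ k * σ x‖ ≤ jweight (-1) x * ‖jweight 3 x * σ x‖ := fun x => by
    rw [norm_mul, norm_mul, ← mul_assoc, Real.norm_of_nonneg (jweight_pos 3 x).le,
      jweight_mul_jweight, norm_pow, Real.norm_eq_abs, show (-1 : ℝ) + 3 = 2 by norm_num]
    exact mul_le_mul_of_nonneg_right (abs_pow_le_jweight_two x hk) (norm_nonneg _)
  simpa [eLpNorm_jweight_neg_one] using
    integrable_and_integral_norm_le_of_norm_le_mul memLp_jweight_neg_one hσ hmeas
      (ae_of_all _ hle)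

lemma norm_exp_neg_I_mul (θ : ℝ) : ‖Complex.exp (-Complex.I * θ)‖ = 1 := by
  simp [Complex.norm_exp]

lemma norm_exp_neg_I_mul_sub_one_add_I_mul_le (θ : ℝ) :
    ‖Complex.exp (-Complex.I * θ) - 1 + Complex.I * θ‖ ≤ 2 * θ ^ 2 := by
  have hnorm : ‖-Complex.I * θ‖ = |θ| := by simp
  rw [show Complex.exp (-Complex.I * θ) - 1 + Complex.I * θ
      = Complex.exp (-Complex.I * θ) - 1 - -Complex.I * θ by ring]
  rcases le_or_gt |θ| 1 with hsmall | hlarge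
  · have := Complex.norm_exp_sub_one_sub_id_le (hnorm ▸ hsmall)
    rw [hnorm, sq_abs] at this
    nlinarith [sq_nonneg θ]
  · have hexp : ‖Complex.exp (-Complex.I * θ) - 1‖ ≤ |θ| := by
      simpa [Complex.ofReal_neg] using Real.norm_exp_I_mul_ofReal_sub_one_le (x := -θ)
    calc ‖Complex.exp (-Complex.I * θ) - 1 - -Complex.I * θ‖
        ≤ ‖Complex.exp (-Complex.I * θ) - 1‖ + ‖-Complex.I * θ‖ := norm_sub_le _ _
      _ ≤ 2 * θ ^ 2 := by nlinarith [sq_abs θ]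

lemma continuous_ftransform {f : ℝ → ℂ} (hf : Integrable f) : Continuous (ftransform f) := by
  refine continuous_of_dominated (bound := fun x => ‖f x‖)
    (fun ξ => hf.1.mul (by fun_prop)) (fun ξ => ae_of_all _ fun x => ?_) hf.norm
    (ae_of_all _ fun x => by fun_prop)
  rw [norm_mul, mul_assoc, ← Complex.ofReal_mul, norm_exp_neg_I_mul, mul_one]

lemma norm_ftransform_le (f : ℝ → ℂ) (ξ : ℝ) : ‖ftransform f ξ‖ ≤ ∫ x, ‖f x‖ :=
  (norm_integral_le_integral_norm _).trans_eq <| integral_congr_ae <| ae_of_all _ fun x => by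
    simp only [norm_mul, mul_assoc, ← Complex.ofReal_mul, norm_exp_neg_I_mul, mul_one]

lemma integrable_mul_exp_neg_I_mul {f : ℝ → ℂ} (hf : Integrable f) (ξ : ℝ) :
    Integrable (fun x => f x * Complex.exp (-Complex.I * x * ξ)) :=
  hf.norm.mono' (hf.1.mul (by fun_prop)) <| ae_of_all _ fun x => by
    rw [norm_mul, mul_assoc, ← Complex.ofReal_mul, norm_exp_neg_I_mul, mul_one]

lemma ftransform_eq_integral_mul_exp_sub_one_add_I_mul {f : ℝ → ℂ} (hf : Integrable f)
    (hxf : Integrable (fun x : ℝ => (x : ℂ) * f x)) (h0 : ∫ x, f x = 0)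
    (h1 : ∫ x : ℝ, (x : ℂ) * f x = 0) (ξ : ℝ) :
    ftransform f ξ =
      ∫ x, f x * (Complex.exp (-Complex.I * x * ξ) - 1 + Complex.I * x * ξ) := by
  have hsplit : (fun x : ℝ => f x * (Complex.exp (-Complex.I * x * ξ) - 1 + Complex.I * x * ξ))
      = fun x => (f x * Complex.exp (-Complex.I * x * ξ) - f x) + Complex.I * ξ * (x * f x) := by
    funext x; ring
  have hkernel := integrable_mul_exp_neg_I_mul hf ξ
  have hsub : Integrable (fun x : ℝ => f x * Complex.exp (-Complex.I * x * ξ) - f x) :=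
    hkernel.sub hf
  rw [hsplit, integral_add hsub (hxf.const_mul _), integral_sub hkernel hf, integral_const_mul,
    h0, h1]
  simp [ftransform]

lemma norm_ftransform_le_sq_mul {f : ℝ → ℂ} (hf : Integrable f)
    (hxf : Integrable (fun x : ℝ => (x : ℂ) * f x)) (hx2f : Integrable (fun x => x ^ 2 * ‖f x‖))
    (h0 : ∫ x, f x = 0) (h1 : ∫ x : ℝ, (x : ℂ) * f x = 0) (ξ : ℝ) :
    ‖ftransform f ξ‖ ≤ 2 * ξ ^ 2 * ∫ x, x ^ 2 * ‖f x‖ := by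
  rw [ftransform_eq_integral_mul_exp_sub_one_add_I_mul hf hxf h0 h1, ← integral_const_mul]
  refine norm_integral_le_of_norm_le (hx2f.const_mul _) (ae_of_all _ fun x => ?_)
  have := norm_exp_neg_I_mul_sub_one_add_I_mul_le (x * ξ)
  push_cast at this
  rw [norm_mul, mul_assoc, mul_assoc]
  calc ‖f x‖ * ‖Complex.exp (-Complex.I * (x * ξ)) - 1 + Complex.I * (x * ξ)‖
      ≤ ‖f x‖ * (2 * (x * ξ) ^ 2) := mul_le_mul_of_nonneg_left this (norm_nonneg _)
    _ = 2 * ξ ^ 2 * (x ^ 2 * ‖f x‖) := by ring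

lemma norm_ftransform_le_min_mul {f : ℝ → ℂ} (hf : Integrable f)
    (hxf : Integrable (fun x : ℝ => (x : ℂ) * f x)) (hx2f : Integrable (fun x => x ^ 2 * ‖f x‖))
    (h0 : ∫ x, f x = 0) (h1 : ∫ x : ℝ, (x : ℂ) * f x = 0) (ξ : ℝ) :
    ‖ftransform f ξ‖ ≤ min (ξ ^ 2) 1 * ((∫ x, ‖f x‖) + 2 * ∫ x, x ^ 2 * ‖f x‖) := by
  have hI0 : 0 ≤ ∫ x, ‖f x‖ := integral_nonneg fun _ => norm_nonneg _
  have hI2 : 0 ≤ ∫ x, x ^ 2 * ‖f x‖ := integral_nonneg fun _ => by positivity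
  have hsq := norm_ftransform_le_sq_mul hf hxf hx2f h0 h1 ξ
  have hnorm := norm_ftransform_le f ξ
  rcases le_total (ξ ^ 2) 1 with hsmall | hlarge
  · rw [min_eq_left hsmall]; nlinarith [sq_nonneg ξ]
  · rw [min_eq_right hlarge]; linarith

lemma norm_ftransform_ofReal_le {σ : ℝ → ℝ} (hσ : MemLp (fun x => jweight 3 x * σ x) 2 volume)
    (hm0 : ∫ x, σ x = 0) (hm1 : ∫ x, x * σ x = 0) (ξ : ℝ) :
    ‖ftransform (fun x => (σ x : ℂ)) ξ‖ ≤
      min (ξ ^ 2) 1 * (3 * √Real.pi * (eLpNorm (fun x => jweight 3 x * σ x) 2 volume).toReal) := by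
  obtain ⟨hint0, hI0⟩ := integrable_pow_mul_and_integral_abs_le hσ (k := 0) (by norm_num)
  obtain ⟨hint1, -⟩ := integrable_pow_mul_and_integral_abs_le hσ (k := 1) (by norm_num)
  obtain ⟨hint2, hI2⟩ := integrable_pow_mul_and_integral_abs_le hσ (k := 2) le_rfl
  simp only [pow_zero, one_mul, pow_one] at hint0 hI0 hint1
  simp only [abs_mul, abs_pow, sq_abs] at hI2
  refine (norm_ftransform_le_min_mul (f := fun x => (σ x : ℂ)) hint0.ofReal ?_ ?_ ?_ ?_ ξ).trans ?_
  · simpa using hint1.ofReal (𝕜 := ℂ)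
  · simpa [abs_mul] using hint2.norm
  · rw [integral_complex_ofReal, hm0, Complex.ofReal_zero]
  · simp_rw [← Complex.ofReal_mul, integral_complex_ofReal, hm1, Complex.ofReal_zero]
  · refine mul_le_mul_of_nonneg_left ?_ (by positivity)
    simp only [Complex.norm_real, Real.norm_eq_abs]
    linarith

lemma norm_abs_rpow_sub_two_mul_ftransform_le {a : ℝ} (ha : a ∈ Set.Icc (0:ℝ) 1) {σ : ℝ → ℝ}
    (hσ : MemLp (fun x => jweight 3 x * σ x) 2 volume) (hm0 : ∫ x, σ x = 0)
    (hm1 : ∫ x, x * σ x = 0) (ξ : ℝ) :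
    ‖((|ξ| ^ (a - 2) : ℝ) : ℂ) * ftransform (fun x => (σ x : ℂ)) ξ‖ ≤
      6 * √Real.pi * (eLpNorm (fun x => jweight 3 x * σ x) 2 volume).toReal * jweight (-1) ξ := by
  set K := (eLpNorm (fun x => jweight 3 x * σ x) 2 volume).toReal
  rw [norm_mul, Complex.norm_real, Real.norm_of_nonneg (by positivity)]
  calc |ξ| ^ (a - 2) * ‖ftransform (fun x => (σ x : ℂ)) ξ‖
      ≤ |ξ| ^ (a - 2) * min (ξ ^ 2) 1 * (3 * √Real.pi * K) := by
        rw [mul_assoc]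
        exact mul_le_mul_of_nonneg_left (norm_ftransform_ofReal_le hσ hm0 hm1 ξ) (by positivity)
    _ ≤ 2 * jweight (-1) ξ * (3 * √Real.pi * K) :=
        mul_le_mul_of_nonneg_right (abs_rpow_sub_two_mul_min_le ha ξ) (by positivity)
    _ = 6 * √Real.pi * K * jweight (-1) ξ := by ring

/-- estimate \eqref{C1}: for `a ∈ (0,1)` there is `C > 0` such that for every
real `σ` with `⟨x⟩³ σ ∈ L²`, zero mean and zero first moment, the function
`ξ ↦ |ξ|^{a-2} σ̂(ξ)` is in `L²(ℝ)` with `‖|ξ|^{a-2} σ̂‖_{L²} ≤ C ‖⟨x⟩³ σ‖_{L²}`. -/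
theorem abs_pow_neg_ftransform_estimate (a : ℝ) (ha : a ∈ Set.Ioo (0:ℝ) 1) :
    ∃ C : ℝ, 0 < C ∧ ∀ σ : ℝ → ℝ,
      MemLp (fun x : ℝ => jweight 3 x * σ x) 2 volume →
      (∫ x : ℝ, σ x) = 0 →
      (∫ x : ℝ, x * σ x) = 0 →
      MemLp (fun ξ : ℝ =>
          ((|ξ| ^ (a - 2) : ℝ) : ℂ) * ftransform (fun x : ℝ => (σ x : ℂ)) ξ) 2 volume ∧
      eLpNorm (fun ξ : ℝ =>
          ((|ξ| ^ (a - 2) : ℝ) : ℂ) * ftransform (fun x : ℝ => (σ x : ℂ)) ξ) 2 volume ≤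
        ENNReal.ofReal C * eLpNorm (fun x : ℝ => jweight 3 x * σ x) 2 volume := by
  refine ⟨6 * Real.pi, by positivity, fun σ hσ hm0 hm1 => ?_⟩
  have hσ_int : Integrable (fun x => (σ x : ℂ)) := by
    simpa using (integrable_pow_mul_and_integral_abs_le hσ (k := 0) (by norm_num)).1.ofReal (𝕜 := ℂ)
  have hmeas : AEStronglyMeasurable (fun ξ : ℝ =>
      ((|ξ| ^ (a - 2) : ℝ) : ℂ) * ftransform (fun x : ℝ => (σ x : ℂ)) ξ) volume :=
    ((Complex.measurable_ofReal.comp (by measurability)).mul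
      (continuous_ftransform hσ_int).measurable).aestronglyMeasurable
  obtain ⟨hmem, hnorm⟩ := memLp_and_eLpNorm_le_of_norm_le_mul_jweight_neg_one hmeas
    (norm_abs_rpow_sub_two_mul_ftransform_le ⟨ha.1.le, ha.2.le⟩ hσ hm0 hm1)
  refine ⟨hmem, hnorm.trans_eq ?_⟩
  rw [mul_right_comm, mul_assoc 6 √Real.pi, Real.mul_self_sqrt Real.pi_pos.le,
    ENNReal.ofReal_mul (by positivity), ENNReal.ofReal_toReal hσ.eLpNorm_ne_top]
end
end
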